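/- Let (α₀, f₀) be a minimizing pair for the finite-interval 1D functional on [0,ℓ], and suppose f₀ > 0 attains its maximum at t₀ ∈ (0,ℓ). Then 0 < t₀ ≤ |α₀| + 1/√b. -/

import Mathlib

/-!
At an interior maximum `t₀` the second derivative of `f₀` is nonpositive, so the equation gives
`(t₀ + α₀)² f₀(t₀) ≤ b⁻¹ (1 - f₀(t₀)²) f₀(t₀) ≤ b⁻¹ f₀(t₀)`. Dividing by `f₀(t₀) > 0` yields
`|t₀ + α₀| ≤ 1/√b`, and hence `t₀ ≤ |α₀| + 1/√b`.
-/

open Filter Topology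

/-- A positive second derivative at a critical point would make it a local minimum as well,
forcing `f` to be locally constant there. -/
theorem IsLocalMax.deriv_deriv_nonpos {f : ℝ → ℝ} {a : ℝ} (hmax : IsLocalMax f a)
    (hc : ContinuousAt f a) : deriv (deriv f) a ≤ 0 := by
  by_contra! hpos
  have hmin : IsLocalMin f a := isLocalMin_of_deriv_deriv_pos hpos hmax.deriv_eq_zero hc
  have hconst : f =ᶠ[𝓝 a] fun _ ↦ f a := by
    filter_upwards [hmax, hmin] with x hle hge using le_antisymm hle hge
  have hderiv : deriv f =ᶠ[𝓝 a] fun _ ↦ 0 := by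
    filter_upwards [hconst.eventuallyEq_nhds] with x hx
    rw [hx.deriv_eq, deriv_const]
  exact hpos.ne' (by rw [hderiv.deriv_eq, deriv_const])

theorem abs_le_one_div_sqrt_of_sq_mul_le {x y b : ℝ} (hb : 0 ≤ b) (hy : 0 < y)
    (h : x ^ 2 * y ≤ (1 / b) * (1 - y ^ 2) * y) : |x| ≤ 1 / √b := by
  have hsq : x ^ 2 ≤ b⁻¹ := by
    refine le_of_mul_le_mul_right ?_ hy
    have : 0 ≤ b⁻¹ * y ^ 3 := by positivity
    linarith [show (1 / b) * (1 - y ^ 2) * y = b⁻¹ * y - b⁻¹ * y ^ 3 by ring]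
  rw [one_div, ← Real.sqrt_inv]
  exact Real.abs_le_sqrt hsq

theorem max_point_bound_general (b ℓ α₀ t₀ : ℝ)
    (hb1 : 1 < b)
    (f₀ : ℝ → ℝ) (hreg : ContDiff ℝ 2 f₀)
    (hode : ∀ t ∈ Set.Icc (0:ℝ) ℓ,
      -(deriv (deriv f₀) t) + (t + α₀) ^ 2 * f₀ t = (1 / b) * (1 - f₀ t ^ 2) * f₀ t)
    (hbounds : ∀ t ∈ Set.Icc (0:ℝ) ℓ, 0 < f₀ t ∧ f₀ t ≤ 1)
    (ht₀ : t₀ ∈ Set.Ioo (0:ℝ) ℓ)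
    (hmax : IsMaxOn f₀ (Set.Icc (0:ℝ) ℓ) t₀) :
    0 < t₀ ∧ t₀ ≤ |α₀| + 1 / Real.sqrt b := by
  have hmem : t₀ ∈ Set.Icc 0 ℓ := Set.Ioo_subset_Icc_self ht₀
  have hconcave : deriv (deriv f₀) t₀ ≤ 0 :=
    (hmax.isLocalMax (Icc_mem_nhds ht₀.1 ht₀.2)).deriv_deriv_nonpos hreg.continuous.continuousAt
  have habs : |t₀ + α₀| ≤ 1 / √b :=
    abs_le_one_div_sqrt_of_sq_mul_le (by linarith) (hbounds t₀ hmem).1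
      (by linarith [hode t₀ hmem])
  exact ⟨ht₀.1, by linarith [le_abs_self (t₀ + α₀), neg_le_abs α₀]⟩

/-- Location of the maximum of the finite-interval 1D minimizer: if `f₀ > 0` solves the
variational equation with Neumann boundary conditions and attains its maximum at
`t₀ ∈ (0, ℓ)`, then `0 < t₀ ≤ |α₀| + 1/√b`. -/
theorem max_point_bound (Θ₀ b ℓ α₀ t₀ : ℝ) (hΘ : 0 < Θ₀)
    (hb1 : 1 < b) (hb2 : b < Θ₀⁻¹) (hℓ : 0 < ℓ)
    (f₀ : ℝ → ℝ) (hreg : ContDiff ℝ 2 f₀)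
    (hode : ∀ t ∈ Set.Icc (0:ℝ) ℓ,
      -(deriv (deriv f₀) t) + (t + α₀) ^ 2 * f₀ t = (1 / b) * (1 - f₀ t ^ 2) * f₀ t)
    (hneu0 : deriv f₀ 0 = 0) (hneuℓ : deriv f₀ ℓ = 0)
    (hbounds : ∀ t ∈ Set.Icc (0:ℝ) ℓ, 0 < f₀ t ∧ f₀ t ≤ 1)
    (ht₀ : t₀ ∈ Set.Ioo (0:ℝ) ℓ)
    (hmax : IsMaxOn f₀ (Set.Icc (0:ℝ) ℓ) t₀) :
    0 < t₀ ∧ t₀ ≤ |α₀| + 1 / Real.sqrt b :=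
  max_point_bound_general b ℓ α₀ t₀ hb1 f₀ hreg hode hbounds ht₀ hmax
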